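/- Let L and G be first-order languages, let A be an L-structure and B a G-structure. Suppose that for every natural number m there exist a natural number d(m) and a function f_m : B^m → A^{d(m)} satisfying: (i) for every subset D ⊆ B^m that is definable in B by a G-formula without parameters, the image f_m(D) ⊆ A^{d(m)} is definable in A by an L-formula without parameters; (ii) for every subset E ⊆ A^{d(m)} that is definable in A by a quantifier-free L-formula without parameters, the preimage f_m^{-1}(E) ⊆ B^m is definable in B by a quantifier-free G-formula without parameters; (iii) for every point a ∈ A^{d(m)} and every subset D ⊆ B^m definable in B without parameters, either f_m^{-1}(a) ⊆ D or f_m^{-1}(a) ∩ D = ∅. If A admits quantifier elimination (i.e., every parameter-free definable subset of A^r, for every r, is definable by a quantifier-free L-formula), then B admits quantifier elimination (every parameter-free definable subset of B^m is definable by a quantifier-free G-formula). -/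
import Mathlib


open FirstOrder FirstOrder.Language

/-- If there are maps `f m : B^m → A^(d m)` that (i) map definable sets to definable sets,
(ii) pull quantifier-free definable sets back to quantifier-free definable sets, and
(iii) have fibers that are never split by definable sets, then quantifier elimination
transfers from `A` to `B`. -/
theorem qe_transfer (L G : Language) (A B : Type*) [L.Structure A] [G.Structure B]
    (d : ℕ → ℕ) (f : ∀ m : ℕ, (Fin m → B) → (Fin (d m) → A))
    -- (i): the image of any definable subset of `B^m` is definable in `A^(d m)`
    (hi : ∀ (m : ℕ) (φ : G.Formula (Fin m)), ∃ θ : L.Formula (Fin (d m)),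
      f m '' {v | φ.Realize v} = {w | θ.Realize w})
    -- (ii): the preimage of any quantifier-free definable subset of `A^(d m)` is
    -- quantifier-free definable in `B^m`
    (hii : ∀ (m : ℕ) (θ : L.Formula (Fin (d m))), θ.IsQF →
      ∃ ψ : G.Formula (Fin m), ψ.IsQF ∧
        f m ⁻¹' {w | θ.Realize w} = {v | ψ.Realize v})
    -- (iii): fibers of `f m` are never split by definable subsets of `B^m`
    (hiii : ∀ (m : ℕ) (a : Fin (d m) → A) (φ : G.Formula (Fin m)),
      f m ⁻¹' {a} ⊆ {v | φ.Realize v} ∨ f m ⁻¹' {a} ∩ {v | φ.Realize v} = ∅)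
    -- `A` admits quantifier elimination
    (hQE : ∀ (r : ℕ) (θ : L.Formula (Fin r)), ∃ θ' : L.Formula (Fin r),
      θ'.IsQF ∧ ∀ w : Fin r → A, θ.Realize w ↔ θ'.Realize w) :
    -- then `B` admits quantifier elimination
    ∀ (m : ℕ) (φ : G.Formula (Fin m)), ∃ ψ : G.Formula (Fin m),
      ψ.IsQF ∧ ∀ v : Fin m → B, φ.Realize v ↔ ψ.Realize v := by
  intro m φ
  obtain ⟨θ, hθ⟩ := hi m φ
  obtain ⟨θ', hθ'QF, hθ'⟩ := hQE (d m) θ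
  obtain ⟨ψ, hψQF, hψ⟩ := hii m θ' hθ'QF
  refine ⟨ψ, hψQF, fun v => ?_⟩
  constructor
  · intro hv
    have : f m v ∈ {w | θ.Realize w} := hθ ▸ ⟨v, hv, rfl⟩
    have : v ∈ f m ⁻¹' {w | θ'.Realize w} := (hθ' (f m v)).mp this
    exact (Set.ext_iff.mp hψ v).mp this
  · intro hv
    have h1 : θ'.Realize (f m v) := (Set.ext_iff.mp hψ v).mpr hv
    have h2 : θ.Realize (f m v) := (hθ' (f m v)).mpr h1
    have h3 : f m v ∈ f m '' {v | φ.Realize v} := hθ ▸ h2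
    obtain ⟨v', hv', hvv'⟩ := h3
    rcases hiii m (f m v) φ with h | h
    · exact h rfl
    · exact absurd (Set.eq_empty_iff_forall_notMem.mp h v' ⟨hvv', hv'⟩) not_false
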